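/- Let Δ ∈ C(r) have singular value decomposition Δ = Σ_j σ_j u_j v_jᵀ with σ_1 ≥ σ_2 ≥ … and orthonormal families (u_j) in ℝ^d and (v_j) in ℝ^T. For an integer m ≥ 1 define the dyadic spectral block Δ_m = Σ_{2^{m−1} ≤ j < 2^m} σ_j u_j v_jᵀ. Then ‖Δ_m‖_F² ≤ 32·r·‖Δ‖_F² / 2^{m−1}, and every column of Δ_m satisfies ‖(Δ_m)_t‖₂² ≤ 32·r·‖Δ‖_F² / 2^{2(m−1)} for all t ∈ {1,…,T}. -/

import Mathlib

open MeasureTheory ProbabilityTheory Matrix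

/-- The (unordered) singular values of a real `m × n` matrix, indexed by `Fin n`:
the square roots of the eigenvalues of `Aᵀ * A`. -/
noncomputable def singVals {m n : ℕ} (A : Matrix (Fin m) (Fin n) ℝ) : Fin n → ℝ :=
  fun i => Real.sqrt (((show (Aᵀ * A).IsHermitian by
    simpa [Matrix.conjTranspose_eq_transpose_of_trivial] using
      Matrix.isHermitian_conjTranspose_mul_self A)).eigenvalues i)

/-- The nuclear (trace) norm: the sum of the singular values. -/
noncomputable def nucNorm {m n : ℕ} (A : Matrix (Fin m) (Fin n) ℝ) : ℝ := ∑ i, singVals A i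

/-- The Frobenius norm. -/
noncomputable def frobNorm {m n : ℕ} (A : Matrix (Fin m) (Fin n) ℝ) : ℝ :=
  Real.sqrt (∑ i, ∑ j, (A i j) ^ 2)

/-- The operator norm: the largest singular value. -/
noncomputable def opNorm {m n : ℕ} (A : Matrix (Fin m) (Fin n) ℝ) : ℝ := ⨆ i, singVals A i

/-- `Π(Δ) = (I - U Uᵀ) Δ (I - V Vᵀ)`. -/
def projPerp {d T r : ℕ} (U : Matrix (Fin d) (Fin r) ℝ) (V : Matrix (Fin T) (Fin r) ℝ)
    (Δ : Matrix (Fin d) (Fin T) ℝ) : Matrix (Fin d) (Fin T) ℝ :=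
  (1 - U * Uᵀ) * Δ * (1 - V * Vᵀ)

/-- The cone `C(r) = {Δ : ‖Π(Δ)‖_* ≤ 3 ‖Δ - Π(Δ)‖_*}`. -/
noncomputable def coneC {d T r : ℕ} (U : Matrix (Fin d) (Fin r) ℝ)
    (V : Matrix (Fin T) (Fin r) ℝ) : Set (Matrix (Fin d) (Fin T) ℝ) :=
  {Δ | nucNorm (projPerp U V Δ) ≤ 3 * nucNorm (Δ - projPerp U V Δ)}

/-- The block-diagonal quadratic form `∑ t, Δ_tᵀ S_t Δ_t`. -/
noncomputable def quadSum {d T : ℕ} (S : Fin T → Matrix (Fin d) (Fin d) ℝ)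
    (Δ : Matrix (Fin d) (Fin T) ℝ) : ℝ :=
  ∑ t, (fun i => Δ i t) ⬝ᵥ (S t).mulVec (fun i => Δ i t)

/-- The restricted strong convexity condition for the block-diagonal matrix with blocks `S t`,
on the cone `cone`, with constant `κ`. -/
def RSC {d T : ℕ} (S : Fin T → Matrix (Fin d) (Fin d) ℝ)
    (cone : Set (Matrix (Fin d) (Fin T) ℝ)) (κ : ℝ) : Prop :=
  ∀ Δ ∈ cone, 2 * κ * (frobNorm Δ) ^ 2 ≤ quadSum S Δ

/-- The cone-restricted operator norm of the block-diagonal matrix with blocks `S t`. -/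
noncomputable def coneOpNorm {d T : ℕ} (S : Fin T → Matrix (Fin d) (Fin d) ℝ)
    (cone : Set (Matrix (Fin d) (Fin T) ℝ)) : ℝ :=
  sSup {c | ∃ Δ ∈ cone, frobNorm Δ = 1 ∧ c = |quadSum S Δ|}

/-!
The nuclear norm is dual to the operator norm: `tr(Aᵀ X) ≤ ‖A‖_*` for every contraction `X`, with
equality when `X` is the polar factor of `A`. This gives the triangle inequality for `‖·‖_*` and,
with `X = ∑ uⱼ vⱼᵀ`, the bound `∑ σⱼ ≤ ‖Δ‖_*`. On the cone `‖Δ‖_* ≤ 4 ‖Δ - Π(Δ)‖_*`, and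
`Δ - Π(Δ)` has rank at most `2r` and Frobenius norm at most `‖Δ‖_F`, so Cauchy–Schwarz over its
singular values gives `(∑ σⱼ)² ≤ 32 r ‖Δ‖_F²`. As the `σⱼ` decrease, each of the at most
`K = 2^(m-1)` singular values in the `m`-th block is at most `(∑ σⱼ) / K`. The squared Frobenius
norm of the block is the sum of their squares, and by Bessel's inequality in the `vⱼ` every column
has squared norm at most their largest square.
-/

section OrthogonalFamilies

variable {ι n : Type*} [Fintype n]

lemma dotProduct_le_sqrt_mul_sqrt (x y : n → ℝ) :
    x ⬝ᵥ y ≤ √(x ⬝ᵥ x) * √(y ⬝ᵥ y) := by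
  simpa [dotProduct, sq] using Real.sum_mul_le_sqrt_mul_sqrt Finset.univ x y

lemma sum_smul_dotProduct_sum_smul [DecidableEq ι] {y : ι → n → ℝ} {μ : ι → ℝ}
    (hy : ∀ i j, y i ⬝ᵥ y j = if i = j then μ i else 0) (s : Finset ι) (a : ι → ℝ) :
    (∑ j ∈ s, a j • y j) ⬝ᵥ (∑ j ∈ s, a j • y j) = ∑ j ∈ s, a j ^ 2 * μ j := by
  simp_rw [sum_dotProduct, dotProduct_sum, smul_dotProduct, dotProduct_smul, hy, smul_eq_mul,
    mul_ite, mul_zero, Finset.sum_ite_eq]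
  exact Finset.sum_congr rfl fun j hj => by rw [if_pos hj]; ring

lemma sum_sq_dotProduct_le [DecidableEq ι] {v : ι → n → ℝ}
    (hv : ∀ i j, v i ⬝ᵥ v j = if i = j then 1 else 0)
    (s : Finset ι) (w : n → ℝ) : ∑ j ∈ s, (v j ⬝ᵥ w) ^ 2 ≤ w ⬝ᵥ w := by
  set p := ∑ j ∈ s, (v j ⬝ᵥ w) • v j
  have hpw : p ⬝ᵥ w = ∑ j ∈ s, (v j ⬝ᵥ w) ^ 2 := by
    simp_rw [p, sum_dotProduct, smul_dotProduct, smul_eq_mul, sq]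
  have hpp : p ⬝ᵥ p = ∑ j ∈ s, (v j ⬝ᵥ w) ^ 2 := by
    simpa using sum_smul_dotProduct_sum_smul hv s fun j => v j ⬝ᵥ w
  have h0 : 0 ≤ (w - p) ⬝ᵥ (w - p) := Finset.sum_nonneg fun _ _ => mul_self_nonneg _
  rw [sub_dotProduct, dotProduct_sub, dotProduct_sub, dotProduct_comm w p, hpw, hpp] at h0
  linarith

lemma sum_smul_vecMulVec_mulVec {p q : Type*} [Fintype q] (s : Finset ι) (c : ι → ℝ)
    (u : ι → p → ℝ) (v : ι → q → ℝ) (w : q → ℝ) :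
    (∑ j ∈ s, c j • vecMulVec (u j) (v j)) *ᵥ w = ∑ j ∈ s, (c j * (v j ⬝ᵥ w)) • u j := by
  simp_rw [sum_mulVec, smul_mulVec, vecMulVec_mulVec, op_smul_eq_smul, smul_smul]

lemma mulVec_dotProduct_mulVec {l p : Type*} [Fintype l] [Fintype p] (A : Matrix l n ℝ)
    (B : Matrix l p ℝ) (x : n → ℝ) (y : p → ℝ) : (A *ᵥ x) ⬝ᵥ (B *ᵥ y) = x ⬝ᵥ ((Aᵀ * B) *ᵥ y) := by
  rw [← mulVec_mulVec, dotProduct_mulVec x, vecMul_transpose]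

end OrthogonalFamilies

section FrobeniusNorm

variable {m n : ℕ}

lemma frobNorm_sq (A : Matrix (Fin m) (Fin n) ℝ) : frobNorm A ^ 2 = ∑ i, ∑ j, A i j ^ 2 :=
  Real.sq_sqrt (Finset.sum_nonneg fun _ _ => Finset.sum_nonneg fun _ _ => sq_nonneg _)

lemma frobNorm_sq_eq_trace (A : Matrix (Fin m) (Fin n) ℝ) :
    frobNorm A ^ 2 = (Aᵀ * A).trace := by
  rw [frobNorm_sq, Finset.sum_comm]
  simp [trace, mul_apply, sq]

end FrobeniusNorm

section SingularVectors

variable {m n : ℕ} (A : Matrix (Fin m) (Fin n) ℝ)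

theorem Matrix.isHermitian_transpose_mul_self : (Aᵀ * A).IsHermitian := by
  simpa [conjTranspose_eq_transpose_of_trivial] using isHermitian_conjTranspose_mul_self A

noncomputable abbrev gramEigenvalues : Fin n → ℝ := (isHermitian_transpose_mul_self A).eigenvalues

noncomputable def rightSingularVector (i : Fin n) : Fin n → ℝ :=
  ⇑((isHermitian_transpose_mul_self A).eigenvectorBasis i)

lemma rightSingularVector_dotProduct (i j : Fin n) :
    rightSingularVector A i ⬝ᵥ rightSingularVector A j = if i = j then 1 else 0 := by
  have h := orthonormal_iff_ite.mp
    (isHermitian_transpose_mul_self A).eigenvectorBasis.orthonormal j i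
  simpa [EuclideanSpace.inner_eq_star_dotProduct, rightSingularVector, eq_comm] using h

lemma sum_rightSingularVector_mul (k l : Fin n) :
    ∑ i, rightSingularVector A i k * rightSingularVector A i l = if k = l then 1 else 0 := by
  have h := congrFun₂ (mem_unitaryGroup_iff.mp
    (isHermitian_transpose_mul_self A).eigenvectorUnitary.2) k l
  simpa [mul_apply, IsHermitian.eigenvectorUnitary_apply, rightSingularVector, one_apply] using h

lemma sum_rightSingularVector_dotProduct_mulVec (M : Matrix (Fin n) (Fin n) ℝ) :
    ∑ i, rightSingularVector A i ⬝ᵥ (M *ᵥ rightSingularVector A i) = M.trace := by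
  have h : ∀ i, rightSingularVector A i ⬝ᵥ (M *ᵥ rightSingularVector A i) =
      ∑ k, ∑ l, M k l * (rightSingularVector A i k * rightSingularVector A i l) := fun i => by
    simp_rw [dotProduct, mulVec, dotProduct, Finset.mul_sum]
    exact Finset.sum_congr rfl fun _ _ => Finset.sum_congr rfl fun _ _ => by ring
  simp_rw [h]
  calc ∑ i, ∑ k, ∑ l, M k l * (rightSingularVector A i k * rightSingularVector A i l)
      = ∑ k, ∑ l, M k l * ∑ i, rightSingularVector A i k * rightSingularVector A i l := by
        simp_rw [Finset.mul_sum]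
        rw [Finset.sum_comm]
        exact Finset.sum_congr rfl fun _ _ => Finset.sum_comm
    _ = M.trace := by simp [sum_rightSingularVector_mul, trace]

lemma mulVec_rightSingularVector_dotProduct (i j : Fin n) :
    (A *ᵥ rightSingularVector A i) ⬝ᵥ (A *ᵥ rightSingularVector A j) =
      if i = j then gramEigenvalues A i else 0 := by
  have h : (Aᵀ * A) *ᵥ rightSingularVector A j =
      gramEigenvalues A j • rightSingularVector A j :=
    (isHermitian_transpose_mul_self A).mulVec_eigenvectorBasis j
  rw [mulVec_dotProduct_mulVec, h, dotProduct_smul, rightSingularVector_dotProduct]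
  split_ifs with hij <;> simp [hij]

lemma gramEigenvalues_nonneg (i : Fin n) : 0 ≤ gramEigenvalues A i := by
  have h := mulVec_rightSingularVector_dotProduct A i i
  rw [if_pos rfl] at h
  exact h ▸ Finset.sum_nonneg fun _ _ => mul_self_nonneg _

end SingularVectors

section NuclearNorm

variable {m n : ℕ}

def IsContraction (X : Matrix (Fin m) (Fin n) ℝ) : Prop :=
  ∀ w, (X *ᵥ w) ⬝ᵥ (X *ᵥ w) ≤ w ⬝ᵥ w

lemma trace_transpose_mul_eq_sum (A X : Matrix (Fin m) (Fin n) ℝ) :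
    (Aᵀ * X).trace =
      ∑ i, (A *ᵥ rightSingularVector A i) ⬝ᵥ (X *ᵥ rightSingularVector A i) := by
  simp_rw [mulVec_dotProduct_mulVec, sum_rightSingularVector_dotProduct_mulVec]

theorem trace_transpose_mul_le_nucNorm {X : Matrix (Fin m) (Fin n) ℝ} (hX : IsContraction X)
    (A : Matrix (Fin m) (Fin n) ℝ) : (Aᵀ * X).trace ≤ nucNorm A := by
  rw [trace_transpose_mul_eq_sum]
  refine Finset.sum_le_sum fun i _ => ?_
  set z := rightSingularVector A i
  calc (A *ᵥ z) ⬝ᵥ (X *ᵥ z) ≤ √((A *ᵥ z) ⬝ᵥ (A *ᵥ z)) * √((X *ᵥ z) ⬝ᵥ (X *ᵥ z)) :=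
        dotProduct_le_sqrt_mul_sqrt _ _
    _ ≤ √(gramEigenvalues A i) * √(z ⬝ᵥ z) := by
        rw [mulVec_rightSingularVector_dotProduct, if_pos rfl]
        gcongr
        exact hX z
    _ = singVals A i := by simp [z, rightSingularVector_dotProduct, singVals]

/-- Since `(√0)⁻¹ = 0`, this is `∑ uᵢ zᵢᵀ` over the nonzero singular values, `uᵢ = A zᵢ / σᵢ`. -/
noncomputable def polarFactor (A : Matrix (Fin m) (Fin n) ℝ) : Matrix (Fin m) (Fin n) ℝ :=
  ∑ i, (√(gramEigenvalues A i))⁻¹ •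
    vecMulVec (A *ᵥ rightSingularVector A i) (rightSingularVector A i)

lemma isContraction_polarFactor (A : Matrix (Fin m) (Fin n) ℝ) :
    IsContraction (polarFactor A) := by
  intro w
  rw [polarFactor, sum_smul_vecMulVec_mulVec,
    sum_smul_dotProduct_sum_smul (mulVec_rightSingularVector_dotProduct A)]
  refine le_trans (Finset.sum_le_sum fun i _ => ?_)
    (sum_sq_dotProduct_le (rightSingularVector_dotProduct A) Finset.univ w)
  have hnn := gramEigenvalues_nonneg A i
  calc ((√(gramEigenvalues A i))⁻¹ * (rightSingularVector A i ⬝ᵥ w)) ^ 2 * gramEigenvalues A i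
      = (rightSingularVector A i ⬝ᵥ w) ^ 2 * ((gramEigenvalues A i)⁻¹ * gramEigenvalues A i) := by
        rw [mul_pow, inv_pow, Real.sq_sqrt hnn]; ring
    _ ≤ (rightSingularVector A i ⬝ᵥ w) ^ 2 :=
        mul_le_of_le_one_right (sq_nonneg _) (inv_mul_le_one_of_le₀ le_rfl hnn)

lemma trace_transpose_mul_polarFactor (A : Matrix (Fin m) (Fin n) ℝ) :
    (Aᵀ * polarFactor A).trace = nucNorm A := by
  rw [trace_transpose_mul_eq_sum]
  refine Finset.sum_congr rfl fun i _ => ?_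
  simp_rw [polarFactor, sum_smul_vecMulVec_mulVec, dotProduct_sum, dotProduct_smul,
    mulVec_rightSingularVector_dotProduct, rightSingularVector_dotProduct, smul_eq_mul]
  rw [Finset.sum_eq_single i (fun j _ hji => by simp [hji]) (by simp)]
  simp only [↓reduceIte, mul_one]
  rw [← div_eq_inv_mul, Real.div_sqrt]
  rfl

theorem nucNorm_add_le (B C : Matrix (Fin m) (Fin n) ℝ) :
    nucNorm (B + C) ≤ nucNorm B + nucNorm C := by
  rw [← trace_transpose_mul_polarFactor, transpose_add, Matrix.add_mul, trace_add]
  exact add_le_add (trace_transpose_mul_le_nucNorm (isContraction_polarFactor _) B)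
    (trace_transpose_mul_le_nucNorm (isContraction_polarFactor _) C)

lemma sum_gramEigenvalues (A : Matrix (Fin m) (Fin n) ℝ) :
    ∑ i, gramEigenvalues A i = frobNorm A ^ 2 := by
  have h := trace_transpose_mul_eq_sum A A
  simp only [mulVec_rightSingularVector_dotProduct, ↓reduceIte] at h
  rw [frobNorm_sq_eq_trace, h]

theorem nucNorm_le_sqrt_rank_mul_frobNorm (A : Matrix (Fin m) (Fin n) ℝ) :
    nucNorm A ≤ √A.rank * frobNorm A := by
  set S := Finset.univ.filter fun i => gramEigenvalues A i ≠ 0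
  have hrank : S.card = A.rank := by
    rw [← rank_transpose_mul_self, (isHermitian_transpose_mul_self A).rank_eq_card_non_zero_eigs,
      Fintype.card_subtype]
  have hsupp : ∑ i ∈ S, singVals A i = nucNorm A :=
    Finset.sum_filter_of_ne fun i _ h hi => h (by simp [singVals, hi])
  have hS : ∑ i ∈ S, gramEigenvalues A i ≤ frobNorm A ^ 2 :=
    sum_gramEigenvalues A ▸ Finset.sum_le_sum_of_subset_of_nonneg (Finset.filter_subset _ _)
      fun i _ _ => gramEigenvalues_nonneg A i
  calc nucNorm A = ∑ i ∈ S, 1 * singVals A i := by simp [hsupp]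
    _ ≤ √(∑ i ∈ S, 1 ^ 2) * √(∑ i ∈ S, singVals A i ^ 2) := Real.sum_mul_le_sqrt_mul_sqrt _ _ _
    _ ≤ √A.rank * frobNorm A := by
        simp_rw [singVals, Real.sq_sqrt (gramEigenvalues_nonneg A _)]
        rw [show ∑ i ∈ S, (1 : ℝ) ^ 2 = A.rank by simp [hrank]]
        gcongr
        exact (Real.sqrt_le_sqrt hS).trans_eq (Real.sqrt_sq (Real.sqrt_nonneg _))

end NuclearNorm

section OrthonormalDecomposition

variable {ι : Type*} [DecidableEq ι] {m n : ℕ} {u : ι → Fin m → ℝ} {v : ι → Fin n → ℝ}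

lemma sum_sq_col_sum_smul_vecMulVec (hu : ∀ i j, u i ⬝ᵥ u j = if i = j then 1 else 0)
    (s : Finset ι) (c : ι → ℝ) (t : Fin n) :
    ∑ i, (∑ j ∈ s, c j • vecMulVec (u j) (v j)) i t ^ 2 = ∑ j ∈ s, c j ^ 2 * v j t ^ 2 := by
  set M := ∑ j ∈ s, c j • vecMulVec (u j) (v j)
  calc ∑ i, M i t ^ 2 = (M *ᵥ Pi.single t 1) ⬝ᵥ (M *ᵥ Pi.single t 1) := by
        simp [dotProduct, sq]
    _ = ∑ j ∈ s, c j ^ 2 * v j t ^ 2 := by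
        rw [sum_smul_vecMulVec_mulVec, sum_smul_dotProduct_sum_smul hu]
        simp [mul_pow]

lemma frobNorm_sq_sum_smul_vecMulVec (hu : ∀ i j, u i ⬝ᵥ u j = if i = j then 1 else 0)
    (hv : ∀ i j, v i ⬝ᵥ v j = if i = j then 1 else 0) (s : Finset ι) (c : ι → ℝ) :
    frobNorm (∑ j ∈ s, c j • vecMulVec (u j) (v j)) ^ 2 = ∑ j ∈ s, c j ^ 2 := by
  rw [frobNorm_sq, Finset.sum_comm]
  simp_rw [sum_sq_col_sum_smul_vecMulVec hu]
  rw [Finset.sum_comm]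
  refine Finset.sum_congr rfl fun j _ => ?_
  have h := hv j j
  simp only [dotProduct, ↓reduceIte] at h
  simp [← Finset.mul_sum, sq, h]

lemma frobNorm_sq_sum_smul_vecMulVec_le (hu : ∀ i j, u i ⬝ᵥ u j = if i = j then 1 else 0)
    (hv : ∀ i j, v i ⬝ᵥ v j = if i = j then 1 else 0) {s : Finset ι} {c : ι → ℝ} {b : ℝ}
    (hc : ∀ j ∈ s, c j ^ 2 ≤ b) :
    frobNorm (∑ j ∈ s, c j • vecMulVec (u j) (v j)) ^ 2 ≤ s.card * b := by
  rw [frobNorm_sq_sum_smul_vecMulVec hu hv, ← nsmul_eq_mul]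
  exact Finset.sum_le_card_nsmul _ _ _ hc

lemma sum_sq_col_sum_smul_vecMulVec_le (hu : ∀ i j, u i ⬝ᵥ u j = if i = j then 1 else 0)
    (hv : ∀ i j, v i ⬝ᵥ v j = if i = j then 1 else 0) {s : Finset ι} {c : ι → ℝ} {b : ℝ}
    (hb : 0 ≤ b) (hc : ∀ j ∈ s, c j ^ 2 ≤ b) (t : Fin n) :
    ∑ i, (∑ j ∈ s, c j • vecMulVec (u j) (v j)) i t ^ 2 ≤ b := by
  have hbessel := sum_sq_dotProduct_le hv s (Pi.single t 1)
  simp only [dotProduct_single_one, Pi.single_eq_same] at hbessel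
  rw [sum_sq_col_sum_smul_vecMulVec hu]
  calc ∑ j ∈ s, c j ^ 2 * v j t ^ 2 ≤ ∑ j ∈ s, b * v j t ^ 2 :=
        Finset.sum_le_sum fun j hj => mul_le_mul_of_nonneg_right (hc j hj) (sq_nonneg _)
    _ ≤ b := by rw [← Finset.mul_sum]; exact mul_le_of_le_one_right hb hbessel

theorem sum_le_nucNorm_sum_smul_vecMulVec [Fintype ι]
    (hu : ∀ i j, u i ⬝ᵥ u j = if i = j then 1 else 0)
    (hv : ∀ i j, v i ⬝ᵥ v j = if i = j then 1 else 0) (c : ι → ℝ) :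
    ∑ j, c j ≤ nucNorm (∑ j, c j • vecMulVec (u j) (v j)) := by
  set X := ∑ k, (1 : ℝ) • vecMulVec (u k) (v k)
  have hX : IsContraction X := fun w => by
    rw [sum_smul_vecMulVec_mulVec, sum_smul_dotProduct_sum_smul hu]
    simpa using sum_sq_dotProduct_le hv Finset.univ w
  refine le_of_eq_of_le ?_ (trace_transpose_mul_le_nucNorm hX _)
  simp_rw [X, Matrix.mul_sum, trace_sum, Matrix.mul_smul, trace_smul, mul_vecMulVec,
    trace_vecMulVec, mulVec_transpose, ← dotProduct_mulVec, sum_smul_vecMulVec_mulVec, dotProduct_sum,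
    dotProduct_smul, hu, hv]
  simp

end OrthonormalDecomposition

theorem Matrix.rank_add_le {m n : ℕ} (B C : Matrix (Fin m) (Fin n) ℝ) :
    (B + C).rank ≤ B.rank + C.rank := by
  have hrange : LinearMap.range (B + C).mulVecLin
      ≤ LinearMap.range B.mulVecLin ⊔ LinearMap.range C.mulVecLin := by
    rintro _ ⟨w, rfl⟩
    rw [mulVecLin_add]
    exact Submodule.add_mem_sup (LinearMap.mem_range_self _ w) (LinearMap.mem_range_self _ w)
  exact (Submodule.finrank_mono hrange).trans (Submodule.finrank_add_le_finrank_add_finrank _ _)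

/-- `A ↦ P A Q` is an orthogonal projection for the trace inner product `tr(Aᵀ B)`. -/
theorem frobNorm_sub_mul_mul_le {d T : ℕ} {P : Matrix (Fin d) (Fin d) ℝ}
    {Q : Matrix (Fin T) (Fin T) ℝ} (hPt : Pᵀ = P) (hP : P * P = P) (hQt : Qᵀ = Q) (hQ : Q * Q = Q)
    (A : Matrix (Fin d) (Fin T) ℝ) : frobNorm (A - P * A * Q) ≤ frobNorm A := by
  set B := A - P * A * Q
  set C := P * A * Q
  have horth : (Bᵀ * C).trace = 0 := by
    have h : Bᵀ * C = Aᵀ * P * A * Q - Q * (Aᵀ * P * A * Q) := by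
      simp only [B, C, transpose_sub, transpose_mul, hPt, hQt, Matrix.sub_mul, Matrix.mul_assoc]
      rw [← Matrix.mul_assoc P P, hP]
    rw [h, trace_sub, trace_mul_comm Q, Matrix.mul_assoc _ Q Q, hQ, sub_self]
  have horth' : (Cᵀ * B).trace = 0 := by
    rw [← trace_transpose, transpose_mul, transpose_transpose, horth]
  have hpyth : frobNorm A ^ 2 = frobNorm B ^ 2 + frobNorm C ^ 2 := by
    rw [show A = B + C by simp [B, C]]
    simp only [frobNorm_sq_eq_trace]
    simp only [transpose_add, Matrix.add_mul, Matrix.mul_add, trace_add, horth, horth']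
    ring
  exact (pow_le_pow_iff_left₀ (Real.sqrt_nonneg _) (Real.sqrt_nonneg _) two_ne_zero).mp
    (hpyth ▸ le_add_of_nonneg_right (sq_nonneg _))

lemma transpose_one_sub_mul_transpose {k r : ℕ} (U : Matrix (Fin k) (Fin r) ℝ) :
    (1 - U * Uᵀ)ᵀ = 1 - U * Uᵀ := by
  simp [transpose_sub, transpose_mul]

lemma one_sub_mul_transpose_mul_self {k r : ℕ} {U : Matrix (Fin k) (Fin r) ℝ} (hU : Uᵀ * U = 1) :
    (1 - U * Uᵀ) * (1 - U * Uᵀ) = 1 - U * Uᵀ := by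
  simp only [Matrix.mul_sub, Matrix.sub_mul, Matrix.mul_one, Matrix.one_mul, Matrix.mul_assoc]
  rw [← Matrix.mul_assoc Uᵀ U, hU, Matrix.one_mul, sub_self, sub_zero]

section Cone

variable {d T r : ℕ} {U : Matrix (Fin d) (Fin r) ℝ} {V : Matrix (Fin T) (Fin r) ℝ}

lemma rank_sub_projPerp_le (Δ : Matrix (Fin d) (Fin T) ℝ) :
    (Δ - projPerp U V Δ).rank ≤ 2 * r := by
  have h : Δ - projPerp U V Δ = U * (Uᵀ * Δ) + (1 - U * Uᵀ) * Δ * V * Vᵀ := by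
    simp only [projPerp, Matrix.mul_sub, Matrix.sub_mul, Matrix.one_mul, Matrix.mul_one,
      Matrix.mul_assoc]
    abel
  have hU : (U * (Uᵀ * Δ)).rank ≤ r := (rank_mul_le_left _ _).trans (rank_le_width U)
  have hV : ((1 - U * Uᵀ) * Δ * V * Vᵀ).rank ≤ r :=
    (rank_mul_le_left _ _).trans ((rank_mul_le_right _ _).trans (rank_le_width V))
  rw [h]
  exact (Matrix.rank_add_le _ _).trans (by omega)

theorem nucNorm_sq_le_of_mem_coneC (hU : Uᵀ * U = 1) (hV : Vᵀ * V = 1)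
    {Δ : Matrix (Fin d) (Fin T) ℝ} (hΔ : Δ ∈ coneC U V) :
    nucNorm Δ ^ 2 ≤ 32 * r * frobNorm Δ ^ 2 := by
  set B := Δ - projPerp U V Δ
  have hsplit : nucNorm Δ ≤ nucNorm B + nucNorm (projPerp U V Δ) := by
    simpa [B] using nucNorm_add_le B (projPerp U V Δ)
  have hB : nucNorm B ≤ √(2 * r) * frobNorm Δ := by
    refine (nucNorm_le_sqrt_rank_mul_frobNorm B).trans
      (mul_le_mul ?_ ?_ (Real.sqrt_nonneg _) (Real.sqrt_nonneg _))
    · exact Real.sqrt_le_sqrt (by exact_mod_cast rank_sub_projPerp_le Δ)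
    · exact frobNorm_sub_mul_mul_le (transpose_one_sub_mul_transpose U)
        (one_sub_mul_transpose_mul_self hU) (transpose_one_sub_mul_transpose V)
        (one_sub_mul_transpose_mul_self hV) Δ
  have hnn : 0 ≤ nucNorm Δ := Finset.sum_nonneg fun _ _ => Real.sqrt_nonneg _
  calc nucNorm Δ ^ 2 ≤ (4 * (√(2 * r) * frobNorm Δ)) ^ 2 := by
        gcongr
        exact hsplit.trans (by linarith [hΔ.out])
    _ = 32 * r * frobNorm Δ ^ 2 := by
        rw [mul_pow, mul_pow, Real.sq_sqrt (by positivity)]; ring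

end Cone

section DyadicBlocks

variable {p : ℕ}

lemma le_sum_div_of_antitone {σ : Fin p → ℝ} (h0 : ∀ j, 0 ≤ σ j) (hσ : Antitone σ) {K : ℕ}
    (hK : 0 < K) {j : Fin p} (hj : K ≤ j.val + 1) : σ j ≤ (∑ i, σ i) / K := by
  rw [le_div_iff₀' (by exact_mod_cast hK)]
  calc K * σ j ≤ (Finset.Iic j).card • σ j := by
        rw [Fin.card_Iic, nsmul_eq_mul]
        exact mul_le_mul_of_nonneg_right (by exact_mod_cast hj) (h0 j)
    _ ≤ ∑ i ∈ Finset.Iic j, σ i :=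
        Finset.card_nsmul_le_sum _ _ _ fun i hi => hσ (Finset.mem_Iic.mp hi)
    _ ≤ ∑ i, σ i :=
        Finset.sum_le_sum_of_subset_of_nonneg (Finset.subset_univ _) fun i _ _ => h0 i

lemma card_filter_le_sub (a b : ℕ) :
    (Finset.univ.filter fun j : Fin p => a ≤ j.val + 1 ∧ j.val + 1 < b).card ≤ b - a := by
  rw [← Nat.card_Ico a b]
  refine Finset.card_le_card_of_injOn (fun j => j.val + 1) (fun j hj => ?_) (fun i _ j _ h => ?_)
  · simpa using (Finset.mem_filter.mp hj).2
  · exact Fin.ext (by simpa using h)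

end DyadicBlocks

theorem stmt7_general {d T r : ℕ}
    (U : Matrix (Fin d) (Fin r) ℝ) (V : Matrix (Fin T) (Fin r) ℝ)
    (hU : Uᵀ * U = 1) (hV : Vᵀ * V = 1)
    (Δ : Matrix (Fin d) (Fin T) ℝ) (hΔ : Δ ∈ coneC U V)
    -- singular value decomposition `Δ = ∑ j, σ_j u_j v_jᵀ` (the index `j : Fin p` is
    -- 0-indexed, corresponding to the 1-indexed singular value `σ_{j+1}`)
    (p : ℕ) (σv : Fin p → ℝ) (u : Fin p → Fin d → ℝ) (v : Fin p → Fin T → ℝ)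
    (hσ_nonneg : ∀ j, 0 ≤ σv j)
    (hσ_mono : ∀ i j : Fin p, i ≤ j → σv j ≤ σv i)
    (hu_orth : ∀ i j : Fin p, u i ⬝ᵥ u j = if i = j then 1 else 0)
    (hv_orth : ∀ i j : Fin p, v i ⬝ᵥ v j = if i = j then 1 else 0)
    (hdecomp : Δ = ∑ j, σv j • Matrix.vecMulVec (u j) (v j))
    (m : ℕ)
    -- the dyadic spectral block `Δ_m = ∑_{2^{m-1} ≤ j < 2^m} σ_j u_j v_jᵀ` (1-indexed `j`)
    (Δm : Matrix (Fin d) (Fin T) ℝ)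
    (hΔm : Δm = ∑ j ∈ Finset.univ.filter
        (fun j : Fin p => 2 ^ (m - 1) ≤ j.val + 1 ∧ j.val + 1 < 2 ^ m),
      σv j • Matrix.vecMulVec (u j) (v j)) :
    (frobNorm Δm) ^ 2 ≤ 32 * r * (frobNorm Δ) ^ 2 / 2 ^ (m - 1) ∧
      ∀ t : Fin T, ∑ i, (Δm i t) ^ 2 ≤ 32 * r * (frobNorm Δ) ^ 2 / 2 ^ (2 * (m - 1)) := by
  set K := 2 ^ (m - 1)
  set s := Finset.univ.filter fun j : Fin p => K ≤ j.val + 1 ∧ j.val + 1 < 2 ^ m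
  set N := ∑ j, σv j
  have hK : (K : ℝ) = 2 ^ (m - 1) := by simp [K]
  have hN : N ^ 2 ≤ 32 * r * frobNorm Δ ^ 2 := by
    refine (pow_le_pow_left₀ (Finset.sum_nonneg fun j _ => hσ_nonneg j) ?_ 2).trans
      (nucNorm_sq_le_of_mem_coneC hU hV hΔ)
    rw [hdecomp]
    exact sum_le_nucNorm_sum_smul_vecMulVec hu_orth hv_orth σv
  have hblock : ∀ j ∈ s, σv j ^ 2 ≤ (N / K) ^ 2 := fun j hj => pow_le_pow_left₀ (hσ_nonneg j)
    (le_sum_div_of_antitone hσ_nonneg hσ_mono (by positivity) (Finset.mem_filter.mp hj).2.1) 2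
  have hcard : (s.card : ℝ) ≤ K := by
    have h2m : 2 ^ m ≤ 2 * K := by rw [← pow_succ']; exact Nat.pow_le_pow_right two_pos (by omega)
    exact_mod_cast (card_filter_le_sub K (2 ^ m)).trans (by omega)
  rw [hΔm]
  refine ⟨(frobNorm_sq_sum_smul_vecMulVec_le hu_orth hv_orth hblock).trans ?_,
    fun t => (sum_sq_col_sum_smul_vecMulVec_le hu_orth hv_orth (sq_nonneg _) hblock t).trans ?_⟩
  · calc _ ≤ (K : ℝ) * (N / K) ^ 2 := by gcongr
      _ = N ^ 2 / K := by field_simp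
      _ ≤ _ := by rw [hK]; gcongr
  · calc (N / K) ^ 2 = N ^ 2 / (K : ℝ) ^ 2 := div_pow _ _ _
      _ ≤ _ := by rw [hK, ← pow_mul, mul_comm]; gcongr

/-- bounds on the dyadic spectral blocks of a matrix in the cone `C(r)`. -/
theorem stmt7 {d T r : ℕ} (hd : 0 < d) (hT : 0 < T) (hr : 0 < r)
    (hrd : r ≤ d) (hrT : r ≤ T)
    (W : Matrix (Fin d) (Fin T) ℝ) (hrank : W.rank = r)
    (U : Matrix (Fin d) (Fin r) ℝ) (V : Matrix (Fin T) (Fin r) ℝ) (Dv : Fin r → ℝ)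
    (hU : Uᵀ * U = 1) (hV : Vᵀ * V = 1) (hDv : ∀ i, 0 < Dv i)
    (hW : W = U * Matrix.diagonal Dv * Vᵀ)
    (Δ : Matrix (Fin d) (Fin T) ℝ) (hΔ : Δ ∈ coneC U V)
    -- singular value decomposition `Δ = ∑ j, σ_j u_j v_jᵀ` (the index `j : Fin p` is
    -- 0-indexed, corresponding to the 1-indexed singular value `σ_{j+1}`)
    (p : ℕ) (σv : Fin p → ℝ) (u : Fin p → Fin d → ℝ) (v : Fin p → Fin T → ℝ)
    (hσ_nonneg : ∀ j, 0 ≤ σv j)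
    (hσ_mono : ∀ i j : Fin p, i ≤ j → σv j ≤ σv i)
    (hu_orth : ∀ i j : Fin p, u i ⬝ᵥ u j = if i = j then 1 else 0)
    (hv_orth : ∀ i j : Fin p, v i ⬝ᵥ v j = if i = j then 1 else 0)
    (hdecomp : Δ = ∑ j, σv j • Matrix.vecMulVec (u j) (v j))
    (m : ℕ) (hm : 1 ≤ m)
    -- the dyadic spectral block `Δ_m = ∑_{2^{m-1} ≤ j < 2^m} σ_j u_j v_jᵀ` (1-indexed `j`)
    (Δm : Matrix (Fin d) (Fin T) ℝ)
    (hΔm : Δm = ∑ j ∈ Finset.univ.filter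
        (fun j : Fin p => 2 ^ (m - 1) ≤ j.val + 1 ∧ j.val + 1 < 2 ^ m),
      σv j • Matrix.vecMulVec (u j) (v j)) :
    (frobNorm Δm) ^ 2 ≤ 32 * r * (frobNorm Δ) ^ 2 / 2 ^ (m - 1) ∧
      ∀ t : Fin T, ∑ i, (Δm i t) ^ 2 ≤ 32 * r * (frobNorm Δ) ^ 2 / 2 ^ (2 * (m - 1)) :=
  stmt7_general U V hU hV Δ hΔ p σv u v hσ_nonneg hσ_mono hu_orth hv_orth hdecomp m Δm hΔm
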